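/- arXiv:1306.3373 — 3 statements merged into one kernel-verified Lean document; each statement's English description precedes it below -/
import Mathlib

section
/- Let b < c be real numbers, f : ℝ → ℝ continuously differentiable, t₁,…,t_m fixed real numbers, and define X : (b,c) → ℝ^m by X(a) = (f(t₁ − a),…,f(t_m − a)). Assume the regularity condition: for every a ∈ (b,c) there exists j ∈ {1,…,m} with f'(t_j − a) ≠ 0. Define the geodesic distance along the curve, expressed in the parameter, by D(a₁,a₂) = |∫_{a₁}^{a₂} ‖X'(a)‖ da|. Let n = 2q+1 be odd and let a₁ ≤ a₂ ≤ … ≤ a_n be points of (b,c) listed in nondecreasing order, so that a_{q+1} is their empirical median. Then for every α ∈ (b,c), Σ_{i=1}^n D(a_i, α) ≥ Σ_{i=1}^n D(a_i, a_{q+1}); consequently the point X(a_{q+1}) = (f(t₁ − a_{q+1}),…,f(t_m − a_{q+1})), i.e. the template f shifted by the empirical median of the shifts, minimizes μ ↦ Σ_{i=1}^n δ(X(a_i), μ) over the curve {X(α) : α ∈ (b,c)}. -/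
open Finset

/-! The arc length `G x = ∫₀ˣ ‖X'‖` is nondecreasing and turns the geodesic distance into
`D a₁ a₂ = |G a₁ - G a₂|`, so the claim reduces to the classical fact that the median of
the real numbers `G (a i)` minimizes the sum of absolute deviations.  That fact follows by
pairing the `i`-th smallest with the `i`-th largest sample point: the median lies between
them, so it minimizes their two-term sum of deviations. -/

section MedianDeviation

variable {α : Type*} [AddCommGroup α] [LinearOrder α] [IsOrderedAddMonoid α]

theorem abs_sub_add_abs_sub_le_of_le_of_le {u v w : α} (huv : u ≤ v) (hvw : v ≤ w) (x : α) :
    |u - v| + |w - v| ≤ |u - x| + |w - x| := by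
  rw [abs_of_nonpos (sub_nonpos.2 huv), abs_of_nonneg (sub_nonneg.2 hvw), abs_sub_comm u x]
  calc -(u - v) + (w - v) = w - u := by abel
    _ ≤ |w - u| := le_abs_self _
    _ ≤ |w - x| + |x - u| := abs_sub_le w x u
    _ = |x - u| + |w - x| := add_comm _ _

theorem Monotone.sum_abs_sub_median_le {q : ℕ} {y : Fin (2 * q + 1) → α} (hy : Monotone y)
    (x : α) :
    ∑ i, |y i - y ⟨q, Nat.lt_succ_of_le (Nat.le_mul_of_pos_left q two_pos)⟩| ≤ ∑ i, |y i - x| := by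
  set k : Fin (2 * q + 1) := ⟨q, Nat.lt_succ_of_le (Nat.le_mul_of_pos_left q two_pos)⟩
  have hpair : ∀ i, |y i - y k| + |y i.rev - y k| ≤ |y i - x| + |y i.rev - x| := by
    intro i
    have hrev : (i.rev : ℕ) = 2 * q - i := by simp [Fin.val_rev]
    rcases le_total (i : ℕ) q with hi | hi
    · exact abs_sub_add_abs_sub_le_of_le_of_le (hy (Fin.le_def.2 hi))
        (hy (Fin.le_def.2 (by simp only [k, hrev]; omega))) x
    · rw [add_comm, add_comm |y i - x|]
      exact abs_sub_add_abs_sub_le_of_le_of_le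
        (hy (Fin.le_def.2 (by simp only [k, hrev]; omega))) (hy (Fin.le_def.2 hi)) x
  have hrev_sum : ∀ z, ∑ i : Fin (2 * q + 1), |y i.rev - z| = ∑ i, |y i - z| := fun z =>
    Equiv.sum_comp Fin.revPerm (fun i => |y i - z|)
  have hsum := sum_le_sum fun i (_ : i ∈ univ) => hpair i
  rw [sum_add_distrib, sum_add_distrib, hrev_sum, hrev_sum, ← two_nsmul, ← two_nsmul] at hsum
  exact le_of_nsmul_le_nsmul_right two_ne_zero hsum

end MedianDeviation

theorem monotone_intervalIntegral_of_nonneg {g : ℝ → ℝ} (hg : Continuous g) (hg₀ : ∀ s, 0 ≤ g s)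
    (b : ℝ) : Monotone fun x => ∫ s in b..x, g s := by
  intro x y hxy
  show (∫ s in b..x, g s) ≤ ∫ s in b..y, g s
  have hdiff : (∫ s in b..y, g s) - ∫ s in b..x, g s = ∫ s in x..y, g s :=
    intervalIntegral.integral_interval_sub_left (hg.intervalIntegrable _ _)
      (hg.intervalIntegrable _ _)
  rw [← sub_nonneg, hdiff]
  exact intervalIntegral.integral_nonneg hxy fun s _ => hg₀ s

theorem abs_intervalIntegral_eq_abs_sub {g : ℝ → ℝ} (hg : Continuous g) (b a₁ a₂ : ℝ) :
    |∫ s in a₁..a₂, g s| = |(∫ s in b..a₁, g s) - ∫ s in b..a₂, g s| := by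
  rw [← intervalIntegral.integral_interval_sub_left (hg.intervalIntegrable _ _)
    (hg.intervalIntegrable _ _), abs_sub_comm]

theorem contDiff_shifted_samples {ι : Type*} [Fintype ι] {n : WithTop ℕ∞} {f : ℝ → ℝ}
    (hf : ContDiff ℝ n f) (t : ι → ℝ) :
    ContDiff ℝ n fun s => (WithLp.toLp 2 fun j => f (t j - s) : EuclideanSpace ℝ ι) := by
  rw [contDiff_euclidean]
  exact fun j => hf.comp (contDiff_const.sub contDiff_id)

/-- **Template estimation in the shift model.**
Let `f : ℝ → ℝ` be continuously differentiable, `t₁,…,t_m` fixed reals, and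
`X a = (f (t₁ - a), …, f (t_m - a)) ∈ ℝ^m`.  Under the regularity condition
(for every `a ∈ (b,c)` some `deriv f (t j - a) ≠ 0`), the geodesic distance
along the curve, expressed in the parameter, is
`D a₁ a₂ = |∫_{a₁}^{a₂} ‖X'(a)‖ da|`.  For an odd sample `n = 2q+1` of
nondecreasing shifts `a₀ ≤ … ≤ a_{2q}` in `(b,c)`, the empirical median shift
`a q` minimizes `α ↦ Σᵢ D (a i) α` over `(b,c)`; i.e. the point
`X (a q)` (the template shifted by the empirical median of the shifts)
minimizes `μ ↦ Σᵢ δ (X (a i)) μ` over the curve. -/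
theorem template_shift_median_minimizes
    (m : ℕ) (f : ℝ → ℝ) (hf : ContDiff ℝ 1 f) (t : Fin m → ℝ)
    (b c : ℝ)
    (X : ℝ → EuclideanSpace ℝ (Fin m))
    (hX : ∀ a : ℝ, ∀ j : Fin m, X a j = f (t j - a))
    (D : ℝ → ℝ → ℝ)
    (hD : ∀ a₁ a₂ : ℝ, D a₁ a₂ = |∫ s in a₁..a₂, ‖deriv X s‖|)
    (q : ℕ) (a : Fin (2 * q + 1) → ℝ)
    (ha_mono : Monotone a) :
    ∀ α ∈ Set.Ioo b c,
      ∑ i, D (a i) (a ⟨q, by omega⟩) ≤ ∑ i, D (a i) α := by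
  intro α _
  have hX_eq : X = fun s => (WithLp.toLp 2 fun j => f (t j - s) : EuclideanSpace ℝ (Fin m)) := by
    funext s; ext j; exact hX s j
  have hX_smooth : ContDiff ℝ 1 X := hX_eq ▸ contDiff_shifted_samples hf t
  have hspeed : Continuous fun s => ‖deriv X s‖ := (hX_smooth.continuous_deriv le_rfl).norm
  set G : ℝ → ℝ := fun x => ∫ s in 0..x, ‖deriv X s‖
  have hDG : ∀ a₁ a₂, D a₁ a₂ = |G a₁ - G a₂| := fun a₁ a₂ => by
    rw [hD, abs_intervalIntegral_eq_abs_sub hspeed 0]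
  have hG : Monotone G := monotone_intervalIntegral_of_nonneg hspeed (fun s => norm_nonneg _) 0
  simp only [hDG]
  exact (hG.comp ha_mono).sum_abs_sub_median_le (G α)
end

section
/- Let b < c be real numbers and g : (b,c) → ℝ a continuous function with g(a) > 0 for all a ∈ (b,c). Define D(a₁,a₂) = |∫_{a₁}^{a₂} g(a) da|. Let a₁ ≤ a₂ ≤ … ≤ a_n be points of (b,c) (n ≥ 1) and C(α) = Σ_{i=1}^n D(a_i, α). Then for every α ∈ (b,c) there exists an index i ∈ {1,…,n} with C(a_i) ≤ C(α); that is, the minimum of C over (b,c) is attained at one of the sample points. -/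
/-!
Writing `F y = ∫ s in α..y, g s`, additivity of the integral gives `D u v = |F u - F v|` on
`(b,c)`, so `C y = ∑ i, |F (a i) - F y|` there. It remains to see that `x ↦ ∑ i, |t i - x|`
attains its minimum over `ℝ` at one of the `t i`: if at least half of the points lie at or
below `x`, moving `x` down to the largest of them does not increase the sum; otherwise move
up to the smallest point above `x`.
-/

open Finset

theorem exists_sum_abs_sub_le_of_card_compl_le {ι : Type*} [Fintype ι] [DecidableEq ι]
    (t : ι → ℝ) (x : ℝ) (s : Finset ι) (hs : s.Nonempty) (hle : ∀ j ∈ s, t j ≤ x)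
    (hcard : #sᶜ ≤ #s) : ∃ i, ∑ j, |t j - t i| ≤ ∑ j, |t j - x| := by
  obtain ⟨i, his, hmax⟩ := s.exists_max_image t hs
  have hix : 0 ≤ x - t i := sub_nonneg.2 (hle i his)
  have hin : ∀ j ∈ s, |t j - t i| = |t j - x| - (x - t i) := fun j hj => by
    rw [abs_of_nonpos (by linarith [hmax j hj]), abs_of_nonpos (by linarith [hle j hj])]
    ring
  have hout : ∀ j ∈ sᶜ, |t j - t i| ≤ |t j - x| + (x - t i) := fun j _ => by
    simpa only [abs_of_nonneg hix] using abs_sub_le (t j) x (t i)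
  have hcard' : (#sᶜ : ℝ) * (x - t i) ≤ #s * (x - t i) :=
    mul_le_mul_of_nonneg_right (by exact_mod_cast hcard) hix
  refine ⟨i, ?_⟩
  calc ∑ j, |t j - t i| = ∑ j ∈ sᶜ, |t j - t i| + ∑ j ∈ s, |t j - t i| :=
        (sum_compl_add_sum s _).symm
    _ ≤ ∑ j ∈ sᶜ, (|t j - x| + (x - t i)) + ∑ j ∈ s, (|t j - x| - (x - t i)) :=
        add_le_add (sum_le_sum hout) (sum_congr rfl hin).le
    _ = ∑ j, |t j - x| + (#sᶜ * (x - t i) - #s * (x - t i)) := by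
        simp only [sum_add_distrib, sum_sub_distrib, sum_const, nsmul_eq_mul,
          ← sum_compl_add_sum s]
        ring
    _ ≤ ∑ j, |t j - x| := by linarith

theorem exists_sum_abs_sub_le_sum_abs_sub {ι : Type*} [Fintype ι] [Nonempty ι]
    (t : ι → ℝ) (x : ℝ) : ∃ i, ∑ j, |t j - t i| ≤ ∑ j, |t j - x| := by
  classical
  set s := univ.filter (t · ≤ x)
  rcases le_or_gt #sᶜ #s with hcard | hcard
  · refine exists_sum_abs_sub_le_of_card_compl_le t x s ?_ (fun j hj => (mem_filter.1 hj).2) hcard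
    have := card_compl_add_card s
    have := Fintype.card_pos (α := ι)
    exact card_pos.1 (by omega)
  · have hneg : ∀ u v : ℝ, |-u - -v| = |u - v| := fun u v => by rw [neg_sub_neg, abs_sub_comm]
    obtain ⟨i, hi⟩ := exists_sum_abs_sub_le_of_card_compl_le (-t) (-x) sᶜ
      (card_pos.1 (by omega))
      (fun j hj => by
        simp only [s, mem_compl, mem_filter, mem_univ, true_and, not_le] at hj
        simpa only [Pi.neg_apply, neg_le_neg_iff] using hj.le)
      (by rw [compl_compl]; exact hcard.le)
    exact ⟨i, by simpa only [Pi.neg_apply, hneg] using hi⟩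

theorem abs_intervalIntegral_eq_abs_sub_s7 {g : ℝ → ℝ} {s : Set ℝ} (hs : s.OrdConnected)
    (hg : ContinuousOn g s) {p u v : ℝ} (hp : p ∈ s) (hu : u ∈ s) (hv : v ∈ s) :
    |∫ x in u..v, g x| = |(∫ x in p..u, g x) - ∫ x in p..v, g x| := by
  have hint : ∀ y ∈ s, IntervalIntegrable g MeasureTheory.volume p y := fun y hy =>
    (hg.mono (hs.uIcc_subset hp hy)).intervalIntegrable
  rw [intervalIntegral.integral_interval_sub_left (hint u hu) (hint v hv),
    intervalIntegral.integral_symm, abs_neg]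

theorem frechet_objective_minimized_at_sample_point_general
    (b c : ℝ) (g : ℝ → ℝ)
    (hg_cont : ContinuousOn g (Set.Ioo b c))
    (D : ℝ → ℝ → ℝ)
    (hD : ∀ a₁ a₂ : ℝ, D a₁ a₂ = |∫ s in a₁..a₂, g s|)
    (n : ℕ) (hn : 1 ≤ n) (a : Fin n → ℝ)
    (ha_mem : ∀ i, a i ∈ Set.Ioo b c)
    (C : ℝ → ℝ)
    (hC : ∀ α : ℝ, C α = ∑ i, D (a i) α) :
    ∀ α ∈ Set.Ioo b c, ∃ i : Fin n, C (a i) ≤ C α := by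
  intro α hα
  set F : ℝ → ℝ := fun y => ∫ s in α..y, g s
  have hCF : ∀ y ∈ Set.Ioo b c, C y = ∑ i, |F (a i) - F y| := fun y hy => by
    simp only [hC, hD,
      abs_intervalIntegral_eq_abs_sub_s7 Set.ordConnected_Ioo hg_cont hα (ha_mem _) hy, F]
  have : Nonempty (Fin n) := ⟨⟨0, hn⟩⟩
  obtain ⟨i, hi⟩ := exists_sum_abs_sub_le_sum_abs_sub (fun j => F (a j)) (F α)
  exact ⟨i, by rwa [hCF _ (ha_mem i), hCF α hα]⟩

/-- The minimum of the Fréchet objective `C α = Σᵢ D (a i) α` over `(b,c)` is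
attained at one of the sample points: for every `α ∈ (b,c)` there is a sample
index `i` with `C (a i) ≤ C α`. -/
theorem frechet_objective_minimized_at_sample_point
    (b c : ℝ) (hbc : b < c) (g : ℝ → ℝ)
    (hg_cont : ContinuousOn g (Set.Ioo b c))
    (hg_pos : ∀ x ∈ Set.Ioo b c, 0 < g x)
    (D : ℝ → ℝ → ℝ)
    (hD : ∀ a₁ a₂ : ℝ, D a₁ a₂ = |∫ s in a₁..a₂, g s|)
    (n : ℕ) (hn : 1 ≤ n) (a : Fin n → ℝ)
    (ha_mem : ∀ i, a i ∈ Set.Ioo b c)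
    (ha_mono : Monotone a)
    (C : ℝ → ℝ)
    (hC : ∀ α : ℝ, C α = ∑ i, D (a i) α) :
    ∀ α ∈ Set.Ioo b c, ∃ i : Fin n, C (a i) ≤ C α :=
  frechet_objective_minimized_at_sample_point_general b c g hg_cont D hD n hn a ha_mem C hC
end

section
/- Let V be a finite type with at least two elements, let p : V → ℝ^m be injective, and let T be a connected simple graph on V. For each v ∈ V let ε_v be the maximum of ‖p(v) − p(w)‖ over all w adjacent to v in T (this maximum exists and is positive since T is connected on at least two vertices). Define the simple graph G′ on V by: v and w are adjacent in G′ if and only if v ≠ w and the closed segment {(1−λ)p(v) + λp(w) : λ ∈ [0,1]} is contained in ⋃_{z ∈ V} B(p(z), ε_z), where B denotes open balls. Then every edge of T is an edge of G′ (T is a subgraph of G′), and consequently G′ is connected. -/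
/-!
A point `z` of the segment `[x, y]` splits its length: `dist x z + dist z y = dist x y`.
Hence if `dist x y < r + s`, then `z` lies within `r` of `x` or within `s` of `y`.
For a tree edge `vw` the length `‖p v - p w‖` is positive and at most both `ε v` and `ε w`,
so its segment lies in `B(p v, ε v) ∪ B(p w, ε w)`, and `vw` is an edge of `G'`.
Since `G'` contains the connected graph `T` on the same vertex set, it is connected.
-/

open Metric

theorem segment_subset_ball_union_ball {E : Type*} [SeminormedAddCommGroup E] [NormedSpace ℝ E]
    {x y : E} {r s : ℝ} (h : dist x y < r + s) :
    segment ℝ x y ⊆ ball x r ∪ ball y s := by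
  intro z hz
  have hsplit := dist_add_dist_of_mem_segment hz
  by_contra hout
  simp only [Set.mem_union, mem_ball, not_or, not_lt] at hout
  rw [dist_comm z x] at hout
  linarith [hout.1, hout.2]

theorem segment_subset_iUnion_ball_of_dist_lt_add {ι E : Type*} [SeminormedAddCommGroup E]
    [NormedSpace ℝ E] (c : ι → E) (ε : ι → ℝ) {v w : ι}
    (h : dist (c v) (c w) < ε v + ε w) :
    segment ℝ (c v) (c w) ⊆ ⋃ z, ball (c z) (ε z) :=
  (segment_subset_ball_union_ball h).trans <|
    Set.union_subset (Set.subset_iUnion_of_subset v le_rfl)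
      (Set.subset_iUnion_of_subset w le_rfl)

theorem robustified_graph_contains_tree_and_connected_general
    (V : Type*) (m : ℕ)
    (p : V → EuclideanSpace ℝ (Fin m)) (hp : Function.Injective p)
    (T : SimpleGraph V) (hT : T.Connected)
    (ε : V → ℝ)
    (hε : ∀ v : V, IsGreatest {d : ℝ | ∃ w : V, T.Adj v w ∧ d = ‖p v - p w‖} (ε v))
    (G' : SimpleGraph V)
    (hG' : ∀ v w : V, G'.Adj v w ↔
      v ≠ w ∧ segment ℝ (p v) (p w) ⊆ ⋃ z : V, Metric.ball (p z) (ε z)) :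
    (∀ v w : V, T.Adj v w → G'.Adj v w) ∧ G'.Connected := by
  have tree_le : ∀ v w : V, T.Adj v w → G'.Adj v w := by
    intro v w hvw
    have hpos : 0 < dist (p v) (p w) := dist_pos.2 (hp.ne hvw.ne)
    have hle_v : dist (p v) (p w) ≤ ε v := (hε v).2 ⟨w, hvw, dist_eq_norm _ _⟩
    have hle_w : dist (p v) (p w) ≤ ε w :=
      (hε w).2 ⟨v, hvw.symm, by rw [dist_comm, dist_eq_norm]⟩
    exact (hG' v w).2 ⟨hvw.ne, segment_subset_iUnion_ball_of_dist_lt_add p ε (by linarith)⟩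
  exact ⟨tree_le, hT.mono tree_le⟩

/-- **Connectedness of the robustified graph `G'`.**
Let `p : V → ℝ^m` be an injective embedding of a finite vertex set with at
least two elements, let `T` be a connected simple graph on `V`, and for each
`v` let `ε v` be the maximum of `‖p v - p w‖` over the `T`-neighbors `w` of
`v`.  Define `G'` by joining `v ≠ w` whenever the closed segment between
`p v` and `p w` is contained in `⋃ z, B(p z, ε z)` (open balls).  Then every
edge of `T` is an edge of `G'`, and consequently `G'` is connected. -/
theorem robustified_graph_contains_tree_and_connected
    (V : Type*) [Fintype V] [Nontrivial V] (m : ℕ)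
    (p : V → EuclideanSpace ℝ (Fin m)) (hp : Function.Injective p)
    (T : SimpleGraph V) (hT : T.Connected)
    (ε : V → ℝ)
    (hε : ∀ v : V, IsGreatest {d : ℝ | ∃ w : V, T.Adj v w ∧ d = ‖p v - p w‖} (ε v))
    (G' : SimpleGraph V)
    (hG' : ∀ v w : V, G'.Adj v w ↔
      v ≠ w ∧ segment ℝ (p v) (p w) ⊆ ⋃ z : V, Metric.ball (p z) (ε z)) :
    (∀ v w : V, T.Adj v w → G'.Adj v w) ∧ G'.Connected :=
  robustified_graph_contains_tree_and_connected_general V m p hp T hT ε hε G' hG'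
end
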